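/- arXiv:2506.01076 — 5 statements merged into one kernel-verified Lean document; each statement's English description precedes it below -/
import Mathlib

section
/- For every closed term t of extended combinatory logic and every value v, the big-step judgement t ⇓ v holds if and only if t →* v (and in that case v has no unlabeled →-successor); this is the instance of the abstract small-step/big-step equivalence theorem for xCL. -/
/-- Closed terms of extended combinatory logic (xCL). -/
inductive Tm : Type
  | S : Tm
  | K : Tm
  | I : Tm
  | S1 : Tm → Tm
  | K1 : Tm → Tm
  | S2 : Tm → Tm → Tm
  | app : Tm → Tm → Tm

/-- A term is a value iff its topmost constructor is one of `S, K, I, S', K', S''`. -/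
def Tm.IsValue : Tm → Prop
  | .app _ _ => False
  | _ => True

/-- Labeled transitions `t ─s→ t'` of call-by-name xCL. -/
inductive LStep : Tm → Tm → Tm → Prop
  | S (t : Tm) : LStep .S t (.S1 t)
  | S1 (t s : Tm) : LStep (.S1 t) s (.S2 t s)
  | S2 (t s r : Tm) : LStep (.S2 t s) r (.app (.app t r) (.app s r))
  | K (t : Tm) : LStep .K t (.K1 t)
  | K1 (t s : Tm) : LStep (.K1 t) s t
  | I (t : Tm) : LStep .I t t

/-- Unlabeled small-step transitions `t → t'` of call-by-name xCL. -/
inductive Step : Tm → Tm → Prop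
  | appL {t t' : Tm} (s : Tm) : Step t t' → Step (.app t s) (.app t' s)
  | beta {t t' s : Tm} : LStep t s t' → Step (.app t s) t'

/-- Big-step semantics `t ⇓ v` of call-by-name xCL. -/
inductive Big : Tm → Tm → Prop
  | val {v : Tm} : v.IsValue → Big v v
  | appI {s t v : Tm} : Big s .I → Big t v → Big (.app s t) v
  | appK {s t : Tm} : Big s .K → Big (.app s t) (.K1 t)
  | appS {s t : Tm} : Big s .S → Big (.app s t) (.S1 t)
  | appK1 {s t r v : Tm} : Big s (.K1 r) → Big r v → Big (.app s t) v
  | appS1 {s t r : Tm} : Big s (.S1 r) → Big (.app s t) (.S2 r t)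
  | appS2 {s t r q v : Tm} :
      Big s (.S2 r q) → Big (.app (.app r t) (.app q t)) v → Big (.app s t) v

lemma value_no_step {v : Tm} (hv : v.IsValue) : ∀ v', ¬ Step v v' := by
  intro v' h
  cases h <;> simp [Tm.IsValue] at hv

lemma steps_appL {a a' : Tm} (s : Tm) (h : Relation.ReflTransGen Step a a') :
    Relation.ReflTransGen Step (.app a s) (.app a' s) := by
  induction h with
  | refl => exact .refl
  | tail _ h ih => exact ih.tail (.appL s h)

lemma big_steps {t v : Tm} (h : Big t v) : Relation.ReflTransGen Step t v := by
  induction h with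
  | val _ => exact .refl
  | appI _ _ ih1 ih2 =>
      exact ((steps_appL _ ih1).tail (.beta (.I _))).trans ih2
  | appK _ ih => exact (steps_appL _ ih).tail (.beta (.K _))
  | appS _ ih => exact (steps_appL _ ih).tail (.beta (.S _))
  | appK1 _ _ ih1 ih2 =>
      exact ((steps_appL _ ih1).tail (.beta (.K1 _ _))).trans ih2
  | appS1 _ ih => exact (steps_appL _ ih).tail (.beta (.S1 _ _))
  | appS2 _ _ ih1 ih2 =>
      exact ((steps_appL _ ih1).tail (.beta (.S2 _ _ _))).trans ih2

lemma value_big {v : Tm} (hv : v.IsValue) : Big v v := .val hv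

lemma step_big {t t' v : Tm} (h : Step t t') (hb : Big t' v) : Big t v := by
  induction h generalizing v with
  | appL s h ih =>
      cases hb with
      | val hv => exact absurd hv (by simp [Tm.IsValue])
      | appI h1 h2 => exact .appI (ih h1) h2
      | appK h1 => exact .appK (ih h1)
      | appS h1 => exact .appS (ih h1)
      | appK1 h1 h2 => exact .appK1 (ih h1) h2
      | appS1 h1 => exact .appS1 (ih h1)
      | appS2 h1 h2 => exact .appS2 (ih h1) h2
  | beta h =>
      cases h with
      | S t =>
          cases hb with
          | val hv => exact .appS (.val trivial)
      | S1 t s =>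
          cases hb with
          | val hv => exact .appS1 (.val trivial)
      | S2 t s r => exact .appS2 (.val trivial) hb
      | K t =>
          cases hb with
          | val hv => exact .appK (.val trivial)
      | K1 t s => exact .appK1 (.val trivial) hb
      | I t => exact .appI (.val trivial) hb

/-- Small-step/big-step equivalence for call-by-name xCL:
`t ⇓ v` iff `t →* v` (and in that case `v` has no unlabeled `→`-successor). -/
theorem xCL_bigstep_iff_smallstep (t v : Tm) (hv : v.IsValue) :
    Big t v ↔ (Relation.ReflTransGen Step t v ∧ ∀ v', ¬ Step v v') := by
  constructor
  · intro h
    exact ⟨big_steps h, value_no_step hv⟩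
  · rintro ⟨h, -⟩
    induction h using Relation.ReflTransGen.head_induction_on with
    | refl => exact .val hv
    | head h _ ih => exact step_big h ih
end

section
/- For every natural number k, Ω_k reduces to Ω_{k+1} in one or more call-by-name small steps: Ω_k →⁺ Ω_{k+1} (via Ω_k →* (S I I)(I^k(S I I)) → (S'(I) I)(I^k(S I I)) → (S''(I,I))(I^k(S I I)) → Ω_{k+1}). In particular every Ω_k has an outgoing unlabeled transition. -/
/-- `I^0(u) = u`, `I^{k+1}(u) = I (I^k(u))`. -/
def Ipow : ℕ → Tm → Tm
  | 0, u => u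
  | k + 1, u => .app .I (Ipow k u)

/-- The term `(S I) I`. -/
def SII : Tm := .app (.app .S .I) .I

/-- `Ω_k = (I^k((S I) I)) (I^k((S I) I))`. -/
def Omega (k : ℕ) : Tm := .app (Ipow k SII) (Ipow k SII)


lemma ipow_steps (k : ℕ) (u : Tm) :
    Relation.ReflTransGen Step (.app (Ipow k SII) u) (.app SII u) := by
  induction k with
  | zero => exact .refl
  | succ n ih =>
      exact Relation.ReflTransGen.head (Step.appL u (Step.beta (LStep.I _))) ih

/-- Each `Ω_k` reduces to `Ω_{k+1}` in one or more call-by-name small steps;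
in particular every `Ω_k` has an outgoing unlabeled transition. -/
theorem Omega_stepsTo_succ (k : ℕ) :
    Relation.TransGen Step (Omega k) (Omega (k + 1)) ∧ ∃ t', Step (Omega k) t' := by
  have h1 : Relation.ReflTransGen Step (Omega k) (.app SII (Ipow k SII)) :=
    ipow_steps k (Ipow k SII)
  have h2 : Step (Tm.app SII (Ipow k SII))
      (.app (.app (.S1 .I) .I) (Ipow k SII)) :=
    Step.appL _ (Step.appL _ (Step.beta (LStep.S _)))
  have h3 : Step (Tm.app (.app (.S1 .I) .I) (Ipow k SII))
      (.app (.S2 .I .I) (Ipow k SII)) :=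
    Step.appL _ (Step.beta (LStep.S1 _ _))
  have h4 : Step (Tm.app (.S2 .I .I) (Ipow k SII)) (Omega (k + 1)) :=
    Step.beta (LStep.S2 _ _ _)
  have htrans : Relation.TransGen Step (Omega k) (Omega (k + 1)) := by
    refine Relation.TransGen.trans_right h1 ?_
    exact (Relation.TransGen.single h2).tail h3 |>.tail h4
  refine ⟨htrans, ?_⟩
  rcases Relation.TransGen.head'_iff.mp htrans with ⟨t', hstep, _⟩
  exact ⟨t', hstep⟩
end

section
/- For every closed xCL term t and every value v: t ⇓ v in the call-by-value big-step semantics if and only if t →* v in the modified call-by-value small-step system with rules (a1), (a2), (b), (c). -/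
/-- Call-by-value big-step semantics `t ⇓ v` of xCL. -/
inductive BigV : Tm → Tm → Prop
  | val {v : Tm} : v.IsValue → BigV v v
  | appI {s t v : Tm} : BigV s .I → BigV t v → BigV (.app s t) v
  | appK {s t w : Tm} : BigV s .K → BigV t w → BigV (.app s t) (.K1 w)
  | appS {s t w : Tm} : BigV s .S → BigV t w → BigV (.app s t) (.S1 w)
  | appK1 {s t r w v : Tm} : BigV s (.K1 r) → BigV t w → BigV r v → BigV (.app s t) v
  | appS1 {s t r w : Tm} : BigV s (.S1 r) → BigV t w → BigV (.app s t) (.S2 r w)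
  | appS2 {s t r q w v : Tm} :
      BigV s (.S2 r q) → BigV t w → BigV (.app (.app r w) (.app q w)) v → BigV (.app s t) v

/-- The original call-by-value small-step system with rules (a), (b), (c). -/
inductive StepA : Tm → Tm → Prop
  | a {t t' : Tm} (s : Tm) : StepA t t' → StepA (.app t s) (.app t' s)
  | b {t s s' : Tm} : t.IsValue → StepA s s' → StepA (.app t s) (.app t s')
  | c {t s t' : Tm} : s.IsValue → LStep t s t' → StepA (.app t s) t'

/-- The modified call-by-value small-step system with rules (a1), (a2), (b), (c). -/
inductive StepB : Tm → Tm → Prop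
  | a1 {t t' s s' : Tm} : StepB t t' → StepB s s' → StepB (.app t s) (.app t' s')
  | a2 {t t' s : Tm} : StepB t t' → s.IsValue → StepB (.app t s) (.app t' s)
  | b {t s s' : Tm} : t.IsValue → StepB s s' → StepB (.app t s) (.app t s')
  | c {t s t' : Tm} : s.IsValue → LStep t s t' → StepB (.app t s) t'

/-
Both semantics decompose an application `s t` in the same way: evaluate `s` to a value `f` and
`t` to a value `w`, fire the labelled transition `f ─w→ e`, and continue with `e`. Rules (a1),
(a2), (b) let the two sides of an application be reduced independently, so reductions of `s` and
`t` to values combine into a reduction of `s t`; this gives `⇓ ⊆ →*` by induction on the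
derivation of `⇓`. Conversely, every `StepB` step is a head expansion for `⇓`, so `→*` followed
by `v ⇓ v` yields `⇓`.
-/

open Relation

theorem LStep.isValue_left {f w e : Tm} (h : LStep f w e) : f.IsValue := by
  cases h <;> trivial

theorem BigV.isValue {t v : Tm} (h : BigV t v) : v.IsValue := by
  induction h <;> trivial

theorem BigV.eq_of_isValue {t v : Tm} (ht : t.IsValue) (h : BigV t v) : v = t := by
  cases h with
  | val => rfl
  | _ => exact ht.elim

theorem BigV.app_iff {s t v : Tm} :
    BigV (s.app t) v ↔ ∃ f w e, BigV s f ∧ BigV t w ∧ LStep f w e ∧ BigV e v := by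
  constructor
  · intro h
    cases h with
    | val h => exact h.elim
    | appI hs ht => exact ⟨_, _, _, hs, ht, .I _, .val ht.isValue⟩
    | appK hs ht => exact ⟨_, _, _, hs, ht, .K _, .val trivial⟩
    | appS hs ht => exact ⟨_, _, _, hs, ht, .S _, .val trivial⟩
    | appK1 hs ht he => exact ⟨_, _, _, hs, ht, .K1 _ _, he⟩
    | appS1 hs ht => exact ⟨_, _, _, hs, ht, .S1 _ _, .val trivial⟩
    | appS2 hs ht he => exact ⟨_, _, _, hs, ht, .S2 _ _ _, he⟩
  · rintro ⟨f, w, e, hs, ht, hl, he⟩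
    cases hl with
    | S => cases he; exact .appS hs ht
    | S1 => cases he; exact .appS1 hs ht
    | S2 => exact .appS2 hs ht he
    | K => cases he; exact .appK hs ht
    | K1 => exact .appK1 hs ht he
    | I => obtain rfl := he.eq_of_isValue ht.isValue; exact .appI hs ht

theorem StepB.reflTransGen_app {t t' s s' : Tm} (ht : ReflTransGen StepB t t')
    (hs : ReflTransGen StepB s s') (ht' : t'.IsValue) (hs' : s'.IsValue) :
    ReflTransGen StepB (t.app s) (t'.app s') := by
  induction ht using ReflTransGen.head_induction_on generalizing s with
  | refl => exact hs.lift (Tm.app t') fun _ _ h => .b ht' h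
  | head h _ ih =>
    rcases hs.cases_head with rfl | ⟨s₁, hs₁, hs₁'⟩
    · exact .head (.a2 h hs') (ih .refl)
    · exact .head (.a1 h hs₁) (ih hs₁')

theorem StepB.reflTransGen_app_of_lStep {s t f w e : Tm} (hs : ReflTransGen StepB s f)
    (ht : ReflTransGen StepB t w) (hw : w.IsValue) (hl : LStep f w e) :
    ReflTransGen StepB (s.app t) e :=
  (reflTransGen_app hs ht hl.isValue_left hw).tail (.c hw hl)

theorem BigV.reflTransGen_stepB {t v : Tm} (h : BigV t v) : ReflTransGen StepB t v := by
  induction h with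
  | val => exact .refl
  | appI _ ht ihs iht => exact StepB.reflTransGen_app_of_lStep ihs iht ht.isValue (.I _)
  | appK _ ht ihs iht => exact StepB.reflTransGen_app_of_lStep ihs iht ht.isValue (.K _)
  | appS _ ht ihs iht => exact StepB.reflTransGen_app_of_lStep ihs iht ht.isValue (.S _)
  | appK1 _ ht _ ihs iht ihe =>
    exact (StepB.reflTransGen_app_of_lStep ihs iht ht.isValue (.K1 _ _)).trans ihe
  | appS1 _ ht ihs iht => exact StepB.reflTransGen_app_of_lStep ihs iht ht.isValue (.S1 _ _)
  | appS2 _ ht _ ihs iht ihe =>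
    exact (StepB.reflTransGen_app_of_lStep ihs iht ht.isValue (.S2 _ _ _)).trans ihe

theorem StepB.bigV_of_bigV {t t' v : Tm} (h : StepB t t') (h' : BigV t' v) : BigV t v := by
  induction h generalizing v with
  | a1 _ _ iht ihs =>
    obtain ⟨f, w, e, hf, hw, hl, he⟩ := BigV.app_iff.1 h'
    exact BigV.app_iff.2 ⟨f, w, e, iht hf, ihs hw, hl, he⟩
  | a2 _ _ iht =>
    obtain ⟨f, w, e, hf, hw, hl, he⟩ := BigV.app_iff.1 h'
    exact BigV.app_iff.2 ⟨f, w, e, iht hf, hw, hl, he⟩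
  | b _ _ ihs =>
    obtain ⟨f, w, e, hf, hw, hl, he⟩ := BigV.app_iff.1 h'
    exact BigV.app_iff.2 ⟨f, w, e, hf, ihs hw, hl, he⟩
  | c hs hl => exact BigV.app_iff.2 ⟨_, _, _, .val hl.isValue_left, .val hs, hl, h'⟩

theorem BigV.of_reflTransGen_stepB {t v : Tm} (h : ReflTransGen StepB t v) (hv : v.IsValue) :
    BigV t v := by
  induction h using ReflTransGen.head_induction_on with
  | refl => exact .val hv
  | head h _ ih => exact h.bigV_of_bigV ih

/-- Call-by-value big-step/small-step equivalence for the modified system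
(a1)(a2)(b)(c): `t ⇓ v` iff `t →* v`. -/
theorem xCL_cbv_big_iff_modified_small (t v : Tm) (hv : v.IsValue) :
    BigV t v ↔ Relation.ReflTransGen StepB t v :=
  ⟨BigV.reflTransGen_stepB, fun h => BigV.of_reflTransGen_stepB h hv⟩
end

section
/- In the call-by-value small-step system (a)(b)(c) of xCL one has (I I)(I I) →* I (I I), whereas in the modified system (a1)(a2)(b)(c) one has (I I)(I I) → I I and it is not the case that (I I)(I I) →* I (I I); hence the two systems define different multi-step reduction relations. -/

lemma noStepB_I : ∀ {x : Tm}, ¬ StepB .I x := by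
  intro x h; cases h

lemma stepB_II : ∀ {x : Tm}, StepB (.app .I .I) x → x = .I := by
  intro x h
  cases h with
  | a1 h1 h2 => exact absurd h1 noStepB_I
  | a2 h1 _ => exact absurd h1 noStepB_I
  | b _ h2 => exact absurd h2 noStepB_I
  | c _ hl => cases hl; rfl

lemma stepB_IIII : ∀ {x : Tm}, StepB (.app (.app .I .I) (.app .I .I)) x → x = .app .I .I := by
  intro x h
  cases h with
  | a1 h1 h2 => rw [stepB_II h1, stepB_II h2]
  | a2 h1 hv => exact absurd hv (by simp [Tm.IsValue])
  | b hv _ => exact absurd hv (by simp [Tm.IsValue])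
  | c hv _ => exact absurd hv (by simp [Tm.IsValue])


/-- `(I I)(I I) →* I (I I)` in system (a)(b)(c), whereas in system
(a1)(a2)(b)(c) one has `(I I)(I I) → I I` and not `(I I)(I I) →* I (I I)`:
the two systems define different multi-step reduction relations. -/
theorem xCL_cbv_systems_differ :
    Relation.ReflTransGen StepA (.app (.app .I .I) (.app .I .I)) (.app .I (.app .I .I)) ∧
    StepB (.app (.app .I .I) (.app .I .I)) (.app .I .I) ∧
    ¬ Relation.ReflTransGen StepB (.app (.app .I .I) (.app .I .I)) (.app .I (.app .I .I)) := by
  refine ⟨?_, ?_, ?_⟩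
  · exact Relation.ReflTransGen.single (StepA.a _ (StepA.c trivial (LStep.I .I)))
  · exact StepB.a1 (StepB.c trivial (LStep.I .I)) (StepB.c trivial (LStep.I .I))
  · intro h
    rcases h.cases_head with h | ⟨x, hx, h⟩
    · simp at h
    obtain rfl := stepB_IIII hx
    rcases h.cases_head with h | ⟨y, hy, h⟩
    · simp at h
    obtain rfl := stepB_II hy
    rcases h.cases_head with h | ⟨z, hz, _⟩
    · simp at h
    exact noStepB_I hz
end

section
/- For all types X, Y, Z and all natural numbers n, m, there is an equivalence of types ((Fin n → X ⊕ Y) × (Fin m → Z)) ≃ (((Fin n → X) × (Fin m → Z)) ⊕ (Σ k in {1,…,n}, Fin (Nat.choose n k) × (Fin k → Y) × (Fin (n − k) → X) × (Fin m → Z))); i.e. (X+Y)^n × Z^m ≅ X^n × Z^m + ∐_{k=1}^{n} C(n,k) × Y^k × X^{n−k} × Z^m. -/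
open Finset

section Aux

variable {X Y : Type*} {n : ℕ}

/-- The set of indices where `f` takes a value in the right summand. -/
private def rset (f : Fin n → X ⊕ Y) : Finset (Fin n) :=
  Finset.univ.filter fun i => (f i).isRight

private def fiberEquiv (s : Finset (Fin n)) :
    {f : Fin n → X ⊕ Y // rset f = s} ≃ ((↥s → Y) × ((↥sᶜ : Type) → X)) where
  toFun := fun f =>
    (fun i => (f.1 i.1).getRight (by
        have h : (i : Fin n) ∈ rset f.1 := by rw [f.2]; exact i.2
        simpa [rset] using h),
     fun i => (f.1 i.1).getLeft (by
        have h : (i : Fin n) ∉ rset f.1 := by rw [f.2]; exact Finset.mem_compl.1 i.2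
        simpa [rset, Sum.not_isRight] using h))
  invFun := fun p =>
    ⟨fun i => if h : i ∈ s then Sum.inr (p.1 ⟨i, h⟩) else Sum.inl (p.2 ⟨i, by simpa using h⟩),
     by
      ext i
      simp only [rset, Finset.mem_filter, Finset.mem_univ, true_and]
      split_ifs with h <;> simp [h]⟩
  left_inv := by
    rintro ⟨f, hf⟩
    apply Subtype.ext
    funext i
    by_cases h : i ∈ s
    · simp only [dif_pos h]
      have hr : (f i).isRight := by
        have h' : i ∈ rset f := by rw [hf]; exact h
        simpa [rset] using h'
      exact Sum.inr_getRight (f i) hr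
    · simp only [dif_neg h]
      have hr : (f i).isLeft := by
        have h' : i ∉ rset f := by rw [hf]; exact h
        simpa [rset, Sum.not_isRight] using h'
      exact Sum.inl_getLeft (f i) hr
  right_inv := by
    rintro ⟨g, h⟩
    refine Prod.ext ?_ ?_
    · funext i
      simp [dif_pos i.2]
    · funext i
      have hi : i.1 ∉ s := Finset.mem_compl.1 i.2
      simp [dif_neg hi]

private def sigmaSumEquiv {α β : Type*} (t : α ⊕ β → Type*) :
    (Σ i : α ⊕ β, t i) ≃ ((Σ a : α, t (.inl a)) ⊕ (Σ b : β, t (.inr b))) where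
  toFun := fun p => match p with
    | ⟨.inl a, x⟩ => .inl ⟨a, x⟩
    | ⟨.inr b, x⟩ => .inr ⟨b, x⟩
  invFun := fun p => match p with
    | .inl ⟨a, x⟩ => ⟨.inl a, x⟩
    | .inr ⟨b, x⟩ => ⟨.inr b, x⟩
  left_inv := by rintro ⟨(a | b), x⟩ <;> rfl
  right_inv := by rintro (⟨a, x⟩ | ⟨b, x⟩) <;> rfl

end Aux

/-- Binomial decomposition `(X+Y)^n × Z^m ≅ X^n × Z^m + ∐_{k=1}^{n} C(n,k) × Y^k × X^{n−k} × Z^m`,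
witnessing that the coproduct injection `Σc(X, Z) → Σc(X + Y, Z)` for the polynomial
bifunctor `Σc(X, Y) = X^n × Y^m` on sets is complemented. -/
theorem binomial_decomposition (X Y Z : Type*) (n m : ℕ) :
    Nonempty (((Fin n → X ⊕ Y) × (Fin m → Z)) ≃
      (((Fin n → X) × (Fin m → Z)) ⊕
        (Σ k : {k : ℕ // 1 ≤ k ∧ k ≤ n},
          Fin (Nat.choose n k.val) × (Fin k.val → Y) × (Fin (n - k.val) → X) ×
            (Fin m → Z)))) := by
  classical
  -- abbreviation for the sigma family
  set T : Finset (Fin n) → Type _ :=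
    fun s => ((↥s → Y) × ((↥sᶜ : Type) → X)) × (Fin m → Z) with hT
  -- step 1: decompose by the set of right-indices
  have e1a : (Fin n → X ⊕ Y) ≃
      Σ s : Finset (Fin n), ((↥s → Y) × ((↥sᶜ : Type) → X)) :=
    (Equiv.sigmaFiberEquiv (rset (X := X) (Y := Y))).symm.trans
      (Equiv.sigmaCongrRight (fun s => fiberEquiv (X := X) (Y := Y) s))
  have e1 : ((Fin n → X ⊕ Y) × (Fin m → Z)) ≃ Σ s : Finset (Fin n), T s :=
    (Equiv.prodCongr e1a (Equiv.refl (Fin m → Z))).trans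
      (Equiv.sigmaProdDistrib
        (fun s : Finset (Fin n) => (↥s → Y) × ((↥sᶜ : Type) → X)) (Fin m → Z))
  -- step 2: split on empty / nonempty
  have e2 : (Σ s : Finset (Fin n), T s) ≃
      ((Σ s : {s : Finset (Fin n) // s = ∅}, T s.1) ⊕
        (Σ s : {s : Finset (Fin n) // ¬ s = ∅}, T s.1)) :=
    ((Equiv.sigmaCongrLeft (β := T) (Equiv.sumCompl (fun s => s = ∅))).symm).trans
      (sigmaSumEquiv _)
  -- left summand: T ∅ ≃ X^n × Z^m
  have e3 : (Σ s : {s : Finset (Fin n) // s = ∅}, T s.1) ≃ ((Fin n → X) × (Fin m → Z)) := by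
    refine (Equiv.sigmaCongrRight (fun s => (Equiv.cast (congrArg T s.2)))).trans ?_
    refine (Equiv.sigmaEquivProd _ _).trans ?_
    refine (Equiv.prodCongr (Equiv.equivPUnit.{_,1} _) ?_).trans (Equiv.punitProd.{0,_} _)
    · exact Equiv.prodCongr
        ((Equiv.prodCongr
          (Equiv.arrowCongr (Finset.equivFinOfCardEq (by simp)) (Equiv.refl Y))
          (Equiv.arrowCongr (Finset.equivFinOfCardEq (by simp)) (Equiv.refl X))).trans
          ((Equiv.prodCongr (Equiv.equivPUnit.{_,1} (Fin 0 → Y)) (Equiv.refl _)).trans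
            (Equiv.punitProd.{0,_} _)))
        (Equiv.refl _)
  -- right summand
  have e4 : (Σ s : {s : Finset (Fin n) // ¬ s = ∅}, T s.1) ≃
      (Σ k : {k : ℕ // 1 ≤ k ∧ k ≤ n},
        Fin (Nat.choose n k.val) × (Fin k.val → Y) × (Fin (n - k.val) → X) × (Fin m → Z)) := by
    -- reindex by cardinality
    set g : {s : Finset (Fin n) // ¬ s = ∅} → {k : ℕ // 1 ≤ k ∧ k ≤ n} :=
      fun s => ⟨s.1.card,
        Nat.one_le_iff_ne_zero.2 (by simpa [Finset.card_eq_zero] using s.2),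
        (Finset.card_le_univ s.1).trans_eq (by simp)⟩ with hg
    refine ((Equiv.sigmaCongrLeft (β := fun s => T s.1)
      (Equiv.sigmaFiberEquiv g)).symm.trans (Equiv.sigmaAssoc
        (γ := fun (k : {k : ℕ // 1 ≤ k ∧ k ≤ n}) (s : {s : {s : Finset (Fin n) // ¬ s = ∅} // g s = k}) => T s.1.1))).trans ?_
    refine Equiv.sigmaCongrRight fun k => ?_
    -- now: Σ s in fiber over k, T s ≃ Fin (choose n k) × ...
    have efib : {s : {s : Finset (Fin n) // ¬ s = ∅} // g s = k} ≃
        {s : Finset (Fin n) // s.card = k.1} :=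
      { toFun := fun s => ⟨s.1.1, by
          have := congrArg Subtype.val s.2; simpa [hg] using this⟩
        invFun := fun s => ⟨⟨s.1, by
            intro h
            have : (1 : ℕ) ≤ 0 := by
              have hc := s.2; rw [h] at hc; simp at hc
              omega
            omega⟩,
          Subtype.ext s.2⟩
        left_inv := fun s => by ext : 2; rfl
        right_inv := fun s => rfl }
    refine (Equiv.sigmaCongr (β₂ := fun _ : {s : Finset (Fin n) // s.card = k.1} =>
        ((Fin k.1 → Y) × (Fin (n - k.1) → X)) × (Fin m → Z))
      efib (fun s =>
      (Equiv.prodCongr (Equiv.prodCongr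
        (Equiv.arrowCongr (Finset.equivFinOfCardEq
          (show s.1.1.card = k.1 from congrArg Subtype.val s.2)) (Equiv.refl Y))
        (Equiv.arrowCongr (Finset.equivFinOfCardEq
          (by rw [Finset.card_compl, show s.1.1.card = k.1 from congrArg Subtype.val s.2]; simp)) (Equiv.refl X)))
        (Equiv.refl _) :
        T s.1.1 ≃ ((Fin k.1 → Y) × (Fin (n - k.1) → X)) × (Fin m → Z)))).trans ?_
    refine (Equiv.sigmaEquivProd _ _).trans ?_
    refine Equiv.prodCongr (Fintype.equivFinOfCardEq ?_) (Equiv.prodAssoc _ _ _)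
    rw [Fintype.card_finset_len]
    simp
  exact ⟨e1.trans (e2.trans (Equiv.sumCongr e3 e4))⟩
end
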